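/- arXiv:2512.06680 — 2 statements merged into one kernel-verified Lean document; each statement's English description precedes it below -/
import Mathlib

section
/- Let (A, L, ρ) be a Lie-Rinehart superalgebra over a field K of characteristic 2. Then the Z/2-graded vector space A ⊕ L (with (A⊕L)₀ = A₀ ⊕ L₀ and (A⊕L)₁ = A₁ ⊕ L₁) is a Lie superalgebra with the bracket [a + x, b + y] := ρ_x(b) + ρ_y(a) + [x,y] for all a,b ∈ A and x,y ∈ L, and the squaring s(a + x) := ρ_x(a) + s(x) for all a ∈ A₁ and x ∈ L₁. -/
/-- A Lie superalgebra over a field of characteristic 2, encoded as a predicate on the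
data: a `ℤ/2`-grading given by complementary submodules `ev` and `od`, a bilinear
symmetric bracket `br` (in characteristic 2 skew-symmetry is symmetry), and a squaring
`sq : L → L` whose value is only relevant on `od`. -/
structure IsLieSuper2 (K : Type*) [Field K] {L : Type*} [AddCommGroup L] [Module K L]
    (ev od : Submodule K L) (br : L → L → L) (sq : L → L) : Prop where
  compl : IsCompl ev od
  add_left : ∀ x y z : L, br (x + y) z = br x z + br y z
  smul_left : ∀ (c : K) (x y : L), br (c • x) y = c • br x y
  symm : ∀ x y : L, br x y = br y x
  alt_ev : ∀ x ∈ ev, br x x = 0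
  grade_ee : ∀ x ∈ ev, ∀ y ∈ ev, br x y ∈ ev
  grade_eo : ∀ x ∈ ev, ∀ y ∈ od, br x y ∈ od
  grade_oo : ∀ x ∈ od, ∀ y ∈ od, br x y ∈ ev
  jacobi_ev : ∀ x ∈ ev, ∀ y ∈ ev, ∀ z : L,
    br (br x y) z = br x (br y z) + br y (br x z)
  sq_mem : ∀ x ∈ od, sq x ∈ ev
  sq_smul : ∀ (c : K), ∀ x ∈ od, sq (c • x) = (c * c) • sq x
  sq_add : ∀ x ∈ od, ∀ y ∈ od, sq (x + y) = sq x + sq y + br x y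
  sq_jacobi : ∀ x ∈ od, ∀ z : L, br (sq x) z = br x (br x z)
/-- An associative supercommutative superalgebra over a field of characteristic 2,
encoded as a predicate on the data: complementary submodules `ev`, `od` and a bilinear
associative commutative product `mul` with `a² = 0` for odd `a`. -/
structure IsSuperComm2 (K : Type*) [Field K] {A : Type*} [AddCommGroup A] [Module K A]
    (ev od : Submodule K A) (mul : A → A → A) : Prop where
  compl : IsCompl ev od
  add_left : ∀ a b c : A, mul (a + b) c = mul a c + mul b c
  smul_left : ∀ (k : K) (a b : A), mul (k • a) b = k • mul a b
  comm : ∀ a b : A, mul a b = mul b a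
  assoc : ∀ a b c : A, mul (mul a b) c = mul a (mul b c)
  alt_od : ∀ a ∈ od, mul a a = 0
  grade_ee : ∀ a ∈ ev, ∀ b ∈ ev, mul a b ∈ ev
  grade_eo : ∀ a ∈ ev, ∀ b ∈ od, mul a b ∈ od
  grade_oo : ∀ a ∈ od, ∀ b ∈ od, mul a b ∈ ev
/-- A Lie-Rinehart superalgebra in characteristic 2: an associative supercommutative
superalgebra `A`, a Lie superalgebra `L` which is an `A`-module via `act`, and an
`A`-linear morphism of Lie superalgebras `ρ : L → Der(A)` (encoded as a bilinear-type
map `ρ : L → A → A` each `ρ x` being a derivation), subject to the three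
Lie-Rinehart compatibility conditions. -/
structure IsLieRinehart2 (K : Type*) [Field K] {A L : Type*}
    [AddCommGroup A] [Module K A] [AddCommGroup L] [Module K L]
    (evA odA : Submodule K A) (mulA : A → A → A)
    (evL odL : Submodule K L) (br : L → L → L) (sq : L → L)
    (act : A → L → L) (ρ : L → A → A) : Prop where
  commA : IsSuperComm2 K evA odA mulA
  lieL : IsLieSuper2 K evL odL br sq
  act_add_left : ∀ (a b : A) (x : L), act (a + b) x = act a x + act b x
  act_add_right : ∀ (a : A) (x y : L), act a (x + y) = act a x + act a y
  act_smul_left : ∀ (k : K) (a : A) (x : L), act (k • a) x = k • act a x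
  act_smul_right : ∀ (k : K) (a : A) (x : L), act a (k • x) = k • act a x
  act_mulA : ∀ (a b : A) (x : L), act (mulA a b) x = act a (act b x)
  act_grade_ee : ∀ a ∈ evA, ∀ x ∈ evL, act a x ∈ evL
  act_grade_eo : ∀ a ∈ evA, ∀ x ∈ odL, act a x ∈ odL
  act_grade_oe : ∀ a ∈ odA, ∀ x ∈ evL, act a x ∈ odL
  act_grade_oo : ∀ a ∈ odA, ∀ x ∈ odL, act a x ∈ evL
  rho_add : ∀ (x y : L) (a : A), ρ (x + y) a = ρ x a + ρ y a
  rho_smul : ∀ (k : K) (x : L) (a : A), ρ (k • x) a = k • ρ x a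
  rho_arg_add : ∀ (x : L) (a b : A), ρ x (a + b) = ρ x a + ρ x b
  rho_arg_smul : ∀ (x : L) (k : K) (a : A), ρ x (k • a) = k • ρ x a
  rho_der : ∀ (x : L) (a b : A), ρ x (mulA a b) = mulA (ρ x a) b + mulA a (ρ x b)
  rho_br : ∀ (x y : L) (a : A), ρ (br x y) a = ρ x (ρ y a) + ρ y (ρ x a)
  rho_sq : ∀ x ∈ odL, ∀ a : A, ρ (sq x) a = ρ x (ρ x a)
  rho_grade_ee : ∀ x ∈ evL, ∀ a ∈ evA, ρ x a ∈ evA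
  rho_grade_eo : ∀ x ∈ evL, ∀ a ∈ odA, ρ x a ∈ odA
  rho_grade_oe : ∀ x ∈ odL, ∀ a ∈ evA, ρ x a ∈ odA
  rho_grade_oo : ∀ x ∈ odL, ∀ a ∈ odA, ρ x a ∈ evA
  rho_act : ∀ (a : A) (x : L) (b : A), ρ (act a x) b = mulA a (ρ x b)
  br_act : ∀ (x y : L) (a : A), br x (act a y) = act a (br x y) + act (ρ x a) y
  sq_act_ev : ∀ a ∈ evA, ∀ x ∈ odL,
    sq (act a x) = act (mulA a a) (sq x) + act (ρ (act a x) a) x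
  sq_act_od : ∀ a ∈ odA, ∀ x ∈ evL,
    sq (act a x) = act (ρ (act a x) a) x

/-!
Through `ρ`, `A` is a graded module over the Lie superalgebra `L`, and `A ⊕ L` is the semidirect
product of `L` with `A` regarded as an abelian ideal. Each axiom for `A ⊕ L` splits into its
`L`-component, which is the corresponding axiom of `L`, and its `A`-component, which holds because
`ρ` turns brackets and squares in `L` into anticommutators and squares of operators on `A`; in
characteristic 2 the remaining cross terms cancel in pairs.
-/

theorem CharTwo.add_self_eq_zero_of_module {K M : Type*} [Ring K] [CharP K 2] [AddCommGroup M]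
    [Module K M] (m : M) : m + m = 0 := by
  rw [← two_smul K m, CharTwo.two_eq_zero, zero_smul]

theorem Submodule.isCompl_prod {K A L : Type*} [Ring K] [AddCommGroup A] [Module K A]
    [AddCommGroup L] [Module K L] {p p' : Submodule K A} {q q' : Submodule K L}
    (hp : IsCompl p p') (hq : IsCompl q q') : IsCompl (p.prod q) (p'.prod q') :=
  ⟨disjoint_iff.2 <| by rw [prod_inf_prod, hp.inf_eq_bot, hq.inf_eq_bot, prod_bot],
    codisjoint_iff.2 <| by rw [prod_sup_prod, hp.sup_eq_top, hq.sup_eq_top, prod_top]⟩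

structure IsLieSuperModule2 (K : Type*) [Field K] {A L : Type*}
    [AddCommGroup A] [Module K A] [AddCommGroup L] [Module K L]
    (evA odA : Submodule K A) (evL odL : Submodule K L) (br : L → L → L) (sq : L → L)
    (ρ : L → A → A) : Prop where
  compl : IsCompl evA odA
  add_left : ∀ (x y : L) (a : A), ρ (x + y) a = ρ x a + ρ y a
  smul_left : ∀ (k : K) (x : L) (a : A), ρ (k • x) a = k • ρ x a
  add_right : ∀ (x : L) (a b : A), ρ x (a + b) = ρ x a + ρ x b
  smul_right : ∀ (x : L) (k : K) (a : A), ρ x (k • a) = k • ρ x a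
  map_br : ∀ (x y : L) (a : A), ρ (br x y) a = ρ x (ρ y a) + ρ y (ρ x a)
  map_sq : ∀ x ∈ odL, ∀ a : A, ρ (sq x) a = ρ x (ρ x a)
  grade_ee : ∀ x ∈ evL, ∀ a ∈ evA, ρ x a ∈ evA
  grade_eo : ∀ x ∈ evL, ∀ a ∈ odA, ρ x a ∈ odA
  grade_oe : ∀ x ∈ odL, ∀ a ∈ evA, ρ x a ∈ odA
  grade_oo : ∀ x ∈ odL, ∀ a ∈ odA, ρ x a ∈ evA

theorem IsLieRinehart2.isLieSuperModule2 {K A L : Type*} [Field K]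
    [AddCommGroup A] [Module K A] [AddCommGroup L] [Module K L]
    {evA odA : Submodule K A} {mulA : A → A → A} {evL odL : Submodule K L} {br : L → L → L}
    {sq : L → L} {act : A → L → L} {ρ : L → A → A}
    (h : IsLieRinehart2 K evA odA mulA evL odL br sq act ρ) :
    IsLieSuperModule2 K evA odA evL odL br sq ρ :=
  ⟨h.commA.compl, h.rho_add, h.rho_smul, h.rho_arg_add, h.rho_arg_smul, h.rho_br, h.rho_sq,
    h.rho_grade_ee, h.rho_grade_eo, h.rho_grade_oe, h.rho_grade_oo⟩

namespace IsLieSuperModule2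

variable {K A L : Type*} [Field K] [CharP K 2]
  [AddCommGroup A] [Module K A] [AddCommGroup L] [Module K L]
  {evA odA : Submodule K A} {evL odL : Submodule K L} {br : L → L → L} {sq : L → L}
  {ρ : L → A → A}

theorem jacobi_fst (hρ : IsLieSuperModule2 K evA odA evL odL br sq ρ) (x y z : L) (a b c : A) :
    ρ (br x y) c + ρ z (ρ x b + ρ y a) =
      (ρ x (ρ y c + ρ z b) + ρ (br y z) a) + (ρ y (ρ x c + ρ z a) + ρ (br x z) b) := by
  simp only [hρ.map_br, hρ.add_right]
  have hb := CharTwo.add_self_eq_zero_of_module (K := K) (ρ x (ρ z b))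
  have ha := CharTwo.add_self_eq_zero_of_module (K := K) (ρ y (ρ z a))
  linear_combination (norm := abel) -hb - ha

theorem sq_jacobi_fst (hρ : IsLieSuperModule2 K evA odA evL odL br sq ρ) {x : L} (hx : x ∈ odL)
    (z : L) (a c : A) :
    ρ (sq x) c + ρ z (ρ x a) = ρ x (ρ x c + ρ z a) + ρ (br x z) a := by
  simp only [hρ.map_sq x hx, hρ.map_br, hρ.add_right]
  have h := CharTwo.add_self_eq_zero_of_module (K := K) (ρ x (ρ z a))
  linear_combination (norm := abel) -h

theorem isLieSuper2_prod (hρ : IsLieSuperModule2 K evA odA evL odL br sq ρ)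
    (hL : IsLieSuper2 K evL odL br sq) :
    IsLieSuper2 K (evA.prod evL) (odA.prod odL)
      (fun p q => (ρ p.2 q.1 + ρ q.2 p.1, br p.2 q.2))
      (fun p => (ρ p.2 p.1, sq p.2)) where
  compl := Submodule.isCompl_prod hρ.compl hL.compl
  add_left p q r := Prod.ext
    (by simp only [Prod.fst_add, Prod.snd_add, hρ.add_left, hρ.add_right]; abel)
    (hL.add_left _ _ _)
  smul_left c p q := Prod.ext
    (by simp only [Prod.smul_fst, Prod.smul_snd, hρ.smul_left, hρ.smul_right, smul_add])
    (hL.smul_left _ _ _)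
  symm p q := Prod.ext (add_comm _ _) (hL.symm _ _)
  alt_ev p hp := Prod.ext (CharTwo.add_self_eq_zero_of_module (K := K) _) (hL.alt_ev _ hp.2)
  grade_ee p hp q hq := ⟨add_mem (hρ.grade_ee _ hp.2 _ hq.1) (hρ.grade_ee _ hq.2 _ hp.1),
    hL.grade_ee _ hp.2 _ hq.2⟩
  grade_eo p hp q hq := ⟨add_mem (hρ.grade_eo _ hp.2 _ hq.1) (hρ.grade_oe _ hq.2 _ hp.1),
    hL.grade_eo _ hp.2 _ hq.2⟩
  grade_oo p hp q hq := ⟨add_mem (hρ.grade_oo _ hp.2 _ hq.1) (hρ.grade_oo _ hq.2 _ hp.1),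
    hL.grade_oo _ hp.2 _ hq.2⟩
  jacobi_ev p hp q hq r := Prod.ext (hρ.jacobi_fst ..) (hL.jacobi_ev _ hp.2 _ hq.2 _)
  sq_mem p hp := ⟨hρ.grade_oo _ hp.2 _ hp.1, hL.sq_mem _ hp.2⟩
  sq_smul c p hp := Prod.ext
    (by simp only [Prod.smul_fst, Prod.smul_snd, hρ.smul_left, hρ.smul_right, smul_smul])
    (hL.sq_smul c _ hp.2)
  sq_add p hp q hq := Prod.ext
    (by simp only [Prod.fst_add, Prod.snd_add, hρ.add_left, hρ.add_right]; abel)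
    (hL.sq_add _ hp.2 _ hq.2)
  sq_jacobi p hp r := Prod.ext (hρ.sq_jacobi_fst hp.2 ..) (hL.sq_jacobi _ hp.2 _)

end IsLieSuperModule2

/-- For a Lie-Rinehart superalgebra `(A, L, ρ)` in characteristic 2,
the graded space `A ⊕ L` is a Lie superalgebra with bracket
`[a + x, b + y] = ρ_x(b) + ρ_y(a) + [x, y]` and squaring
`s(a + x) = ρ_x(a) + s(x)`. -/
theorem lieRinehart_direct_sum_isLieSuper
    {K A L : Type*} [Field K] [CharP K 2]
    [AddCommGroup A] [Module K A] [AddCommGroup L] [Module K L]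
    (evA odA : Submodule K A) (mulA : A → A → A)
    (evL odL : Submodule K L) (br : L → L → L) (sq : L → L)
    (act : A → L → L) (ρ : L → A → A)
    (hLR : IsLieRinehart2 K evA odA mulA evL odL br sq act ρ) :
    IsLieSuper2 K (evA.prod evL) (odA.prod odL)
      (fun p q => (ρ p.2 q.1 + ρ q.2 p.1, br p.2 q.2))
      (fun p => (ρ p.2 p.1, sq p.2)) :=
  hLR.isLieSuperModule2.isLieSuper2_prod hLR.lieL
end

section
/- Let (P, {-,-}, s) be a Poisson superalgebra over a field K of characteristic 2. Define π, γ : P → End(P) by π(x)(v) = xv and γ(x)(v) = {x,v}. Then (P, π, γ) is a representation of P on itself; in particular, for all x ∈ P₁ and y ∈ P₀ one has y{x, xv} = xy{x, v} for all even v ∈ P₀, and y²{x, w} = y{x, yw} + xy{y, w} + {y, xyw} for all odd w ∈ P₁. -/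
/-- A Poisson superalgebra in characteristic 2: a Lie superalgebra together with an
associative supercommutative product satisfying the Leibniz rule and the compatibility
of the squaring with the product. -/
structure IsPoisson2 (K : Type*) [Field K] {P : Type*} [AddCommGroup P] [Module K P]
    (ev od : Submodule K P) (mul br : P → P → P) (sq : P → P) : Prop where
  commAlg : IsSuperComm2 K ev od mul
  lieAlg : IsLieSuper2 K ev od br sq
  leibniz : ∀ x y z : P, br (mul x y) z = mul x (br y z) + mul (br x z) y
  sq_mul : ∀ x ∈ ev, ∀ y ∈ od,
    sq (mul x y) = mul (mul x x) (sq y) + mul (mul x y) (br x y)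
/-- A representation of a Poisson superalgebra `(P, mul, br, sq)` in characteristic 2
on a graded vector space `V`: a pair of even bilinear-type maps `π, γ`, with `π` a
morphism of associative superalgebras, `γ` a morphism of Lie superalgebras, subject to
the four compatibility conditions. -/
structure IsPoissonRep2 (K : Type*) [Field K] {P V : Type*}
    [AddCommGroup P] [Module K P] [AddCommGroup V] [Module K V]
    (evP odP : Submodule K P) (mul br : P → P → P) (sq : P → P)
    (evV odV : Submodule K V) (π γ : P → V → V) : Prop where
  π_add_left : ∀ (x y : P) (v : V), π (x + y) v = π x v + π y v
  π_smul_left : ∀ (c : K) (x : P) (v : V), π (c • x) v = c • π x v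
  π_add_right : ∀ (x : P) (v w : V), π x (v + w) = π x v + π x w
  π_smul_right : ∀ (x : P) (c : K) (v : V), π x (c • v) = c • π x v
  γ_add_left : ∀ (x y : P) (v : V), γ (x + y) v = γ x v + γ y v
  γ_smul_left : ∀ (c : K) (x : P) (v : V), γ (c • x) v = c • γ x v
  γ_add_right : ∀ (x : P) (v w : V), γ x (v + w) = γ x v + γ x w
  γ_smul_right : ∀ (x : P) (c : K) (v : V), γ x (c • v) = c • γ x v
  π_even_ee : ∀ x ∈ evP, ∀ v ∈ evV, π x v ∈ evV
  π_even_eo : ∀ x ∈ evP, ∀ v ∈ odV, π x v ∈ odV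
  π_even_oe : ∀ x ∈ odP, ∀ v ∈ evV, π x v ∈ odV
  π_even_oo : ∀ x ∈ odP, ∀ v ∈ odV, π x v ∈ evV
  γ_even_ee : ∀ x ∈ evP, ∀ v ∈ evV, γ x v ∈ evV
  γ_even_eo : ∀ x ∈ evP, ∀ v ∈ odV, γ x v ∈ odV
  γ_even_oe : ∀ x ∈ odP, ∀ v ∈ evV, γ x v ∈ odV
  γ_even_oo : ∀ x ∈ odP, ∀ v ∈ odV, γ x v ∈ evV
  π_mul : ∀ (x y : P) (v : V), π (mul x y) v = π x (π y v)
  γ_br : ∀ (x y : P) (v : V), γ (br x y) v = γ x (γ y v) + γ y (γ x v)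
  γ_sq : ∀ x ∈ odP, ∀ v : V, γ (sq x) v = γ x (γ x v)
  compat_mul : ∀ (x y : P) (v : V), γ (mul x y) v = π x (γ y v) + π y (γ x v)
  compat_br : ∀ (x y : P) (v : V), π (br x y) v = π x (γ y v) + γ y (π x v)
  compat_odd_ev : ∀ x ∈ odP, ∀ y ∈ evP, ∀ v ∈ evV,
    π y (γ x (π x v)) = π x (π y (γ x v))
  compat_odd_od : ∀ x ∈ odP, ∀ y ∈ evP, ∀ w ∈ odV,
    π y (π y (γ x w)) = π y (γ x (π y w)) + π x (π y (γ y w)) + γ y (π x (π y w))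


/-!
`π` is a morphism of associative algebras by associativity. For `γ` the only real content is the
Jacobi identity for *all* elements, which the axioms give only for two even arguments; for two
odd arguments it follows by polarizing `{s(x), z} = {x, {x, z}}`. In characteristic 2 the
bracket is symmetric, so the Jacobiator `J(x, y, z)` is totally symmetric and additive in each
argument, and it vanishes as soon as two of its arguments have the same parity. Every
homogeneous triple has such a pair, so `J = 0`. The remaining compatibilities follow from the
Leibniz rule and `{x, x} = 0`, which for odd `x` comes from polarizing the squaring at
`x + x = 0`.
-/

section CharTwo

variable {M : Type*} [AddCommGroup M]

theorem add_self_eq_zero_of_charTwo (K : Type*) [Ring K] [CharP K 2] [Module K M] (p : M) :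
    p + p = 0 := by
  rw [← two_smul K, CharTwo.two_eq_zero, zero_smul]

theorem add_eq_zero_iff_eq_of_charTwo (K : Type*) [Ring K] [CharP K 2] [Module K M] {a b : M} :
    a + b = 0 ↔ a = b := by
  rw [add_eq_zero_iff_eq_neg, neg_eq_of_add_eq_zero_left (add_self_eq_zero_of_charTwo K b)]

theorem add_add_cancel_left_of_charTwo (K : Type*) [Ring K] [CharP K 2] [Module K M]
    (a b : M) : a + (a + b) = b := by
  rw [← add_assoc, add_self_eq_zero_of_charTwo K, zero_add]

end CharTwo

namespace IsSuperComm2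

variable {K A : Type*} [Field K] [AddCommGroup A] [Module K A] {ev od : Submodule K A}
  {mul : A → A → A}

theorem add_right (h : IsSuperComm2 K ev od mul) (a b c : A) :
    mul a (b + c) = mul a b + mul a c := by
  rw [h.comm, h.add_left, h.comm b, h.comm c]

theorem smul_right (h : IsSuperComm2 K ev od mul) (a : A) (k : K) (b : A) :
    mul a (k • b) = k • mul a b := by
  rw [h.comm, h.smul_left, h.comm b]

theorem zero_left (h : IsSuperComm2 K ev od mul) (b : A) : mul 0 b = 0 := by
  simpa using h.smul_left 0 0 b

theorem left_comm (h : IsSuperComm2 K ev od mul) (a b c : A) :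
    mul a (mul b c) = mul b (mul a c) := by
  rw [← h.assoc, h.comm a b, h.assoc]

theorem grade_oe (h : IsSuperComm2 K ev od mul) {a b : A} (ha : a ∈ od) (hb : b ∈ ev) :
    mul a b ∈ od :=
  h.comm a b ▸ h.grade_eo b hb a ha

end IsSuperComm2

def jacobiator {L : Type*} [Add L] (br : L → L → L) (x y z : L) : L :=
  br x (br y z) + br y (br z x) + br z (br x y)

theorem jacobiator_rotate {L : Type*} [AddCommGroup L] (br : L → L → L) (x y z : L) :
    jacobiator br x y z = jacobiator br y z x := by
  unfold jacobiator; abel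

namespace IsLieSuper2

variable {K L : Type*} [Field K] [AddCommGroup L] [Module K L] {ev od : Submodule K L}
  {br : L → L → L} {sq : L → L}

theorem add_right (h : IsLieSuper2 K ev od br sq) (x y z : L) :
    br x (y + z) = br x y + br x z := by
  rw [h.symm, h.add_left, h.symm y, h.symm z]

theorem smul_right (h : IsLieSuper2 K ev od br sq) (x : L) (c : K) (y : L) :
    br x (c • y) = c • br x y := by
  rw [h.symm, h.smul_left, h.symm y]

theorem grade_oe (h : IsLieSuper2 K ev od br sq) {x y : L} (hx : x ∈ od) (hy : y ∈ ev) :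
    br x y ∈ od :=
  h.symm x y ▸ h.grade_eo y hy x hx

theorem sq_zero (h : IsLieSuper2 K ev od br sq) : sq 0 = 0 := by
  simpa using h.sq_smul 0 0 od.zero_mem

theorem br_self_of_mem_od [CharP K 2] (h : IsLieSuper2 K ev od br sq) {x : L} (hx : x ∈ od) :
    br x x = 0 := by
  have := h.sq_add x hx x hx
  rwa [add_self_eq_zero_of_charTwo K x, add_self_eq_zero_of_charTwo K (sq x), h.sq_zero,
    zero_add, eq_comm] at this

theorem br_self [CharP K 2] (h : IsLieSuper2 K ev od br sq) (x : L) : br x x = 0 := by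
  obtain ⟨a, b, ha, hb, rfl⟩ := Submodule.codisjoint_iff_exists_add_eq.mp h.compl.codisjoint x
  rw [h.add_left, h.add_right, h.add_right, h.alt_ev a ha, h.br_self_of_mem_od hb, h.symm b a,
    zero_add, add_zero, add_self_eq_zero_of_charTwo K]

theorem jacobi_od (h : IsLieSuper2 K ev od br sq) {x y : L} (hx : x ∈ od) (hy : y ∈ od)
    (z : L) : br (br x y) z = br x (br y z) + br y (br x z) := by
  have hxy := h.sq_jacobi (x + y) (od.add_mem hx hy) z
  rw [h.sq_add x hx y hy, h.add_left, h.add_left, h.sq_jacobi x hx, h.sq_jacobi y hy,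
    h.add_left, h.add_left x y z, h.add_right, h.add_right y] at hxy
  have : br x (br x z) + br y (br y z) + br (br x y) z =
      br x (br x z) + br y (br y z) + (br x (br y z) + br y (br x z)) := by
    rw [hxy]; abel
  exact add_left_cancel this

theorem jacobiator_swap (h : IsLieSuper2 K ev od br sq) (x y z : L) :
    jacobiator br x y z = jacobiator br y x z := by
  unfold jacobiator
  rw [h.symm z x, h.symm z y, h.symm x y]
  abel

theorem jacobiator_add_left (h : IsLieSuper2 K ev od br sq) (x x' y z : L) :
    jacobiator br (x + x') y z = jacobiator br x y z + jacobiator br x' y z := by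
  unfold jacobiator
  rw [h.add_left, h.add_right, h.add_left, h.add_right, h.add_right]
  abel

theorem jacobiator_eq_zero_iff [CharP K 2] (h : IsLieSuper2 K ev od br sq) (x y z : L) :
    jacobiator br x y z = 0 ↔ br (br x y) z = br x (br y z) + br y (br x z) := by
  rw [jacobiator, h.symm z x, h.symm z (br x y), add_eq_zero_iff_eq_of_charTwo K, eq_comm]

theorem jacobiator_eq_zero_of_homogeneous [CharP K 2] (h : IsLieSuper2 K ev od br sq)
    {x y z : L} (hx : x ∈ ev ∨ x ∈ od) (hy : y ∈ ev ∨ y ∈ od) (hz : z ∈ ev ∨ z ∈ od) :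
    jacobiator br x y z = 0 := by
  have same : ∀ {a b : L} (c : L), (a ∈ ev ∧ b ∈ ev) ∨ (a ∈ od ∧ b ∈ od) →
      jacobiator br a b c = 0 := by
    rintro a b c (⟨ha, hb⟩ | ⟨ha, hb⟩)
    · exact (h.jacobiator_eq_zero_iff a b c).mpr (h.jacobi_ev a ha b hb c)
    · exact (h.jacobiator_eq_zero_iff a b c).mpr (h.jacobi_od ha hb c)
  rcases hx with hx | hx <;> rcases hy with hy | hy <;> rcases hz with hz | hz <;>
    first
    | exact same z (by tauto)
    | rw [jacobiator_rotate]; exact same x (by tauto)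
    | rw [← jacobiator_rotate]; exact same y (by tauto)

theorem jacobiator_eq_zero_of_forall_homogeneous (h : IsLieSuper2 K ev od br sq) {y z : L}
    (hyz : ∀ x, x ∈ ev ∨ x ∈ od → jacobiator br x y z = 0) (x : L) :
    jacobiator br x y z = 0 := by
  obtain ⟨a, b, ha, hb, rfl⟩ := Submodule.codisjoint_iff_exists_add_eq.mp h.compl.codisjoint x
  rw [h.jacobiator_add_left, hyz a (.inl ha), hyz b (.inr hb), add_zero]

theorem jacobiator_eq_zero [CharP K 2] (h : IsLieSuper2 K ev od br sq) (x y z : L) :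
    jacobiator br x y z = 0 := by
  have h₁ : ∀ {y z : L}, (y ∈ ev ∨ y ∈ od) → (z ∈ ev ∨ z ∈ od) → ∀ x, jacobiator br x y z = 0 :=
    fun hy hz => h.jacobiator_eq_zero_of_forall_homogeneous fun _ hx =>
      h.jacobiator_eq_zero_of_homogeneous hx hy hz
  have h₂ : ∀ {z : L}, (z ∈ ev ∨ z ∈ od) → ∀ x y, jacobiator br x y z = 0 := fun hz x y => by
    rw [h.jacobiator_swap]
    exact h.jacobiator_eq_zero_of_forall_homogeneous (fun y hy => by
      rw [h.jacobiator_swap]; exact h₁ hy hz x) y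
  rw [jacobiator_rotate, jacobiator_rotate]
  exact h.jacobiator_eq_zero_of_forall_homogeneous (fun z hz => by
    rw [← jacobiator_rotate, ← jacobiator_rotate]; exact h₂ hz x y) z

theorem jacobi [CharP K 2] (h : IsLieSuper2 K ev od br sq) (x y z : L) :
    br (br x y) z = br x (br y z) + br y (br x z) :=
  (h.jacobiator_eq_zero_iff x y z).mp (h.jacobiator_eq_zero x y z)

end IsLieSuper2

namespace IsPoisson2

variable {K P : Type*} [Field K] [AddCommGroup P] [Module K P] {ev od : Submodule K P}
  {mul br : P → P → P} {sq : P → P}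

theorem br_mul_right (h : IsPoisson2 K ev od mul br sq) (x y z : P) :
    br z (mul x y) = mul x (br z y) + mul (br z x) y := by
  rw [h.lieAlg.symm, h.leibniz, h.lieAlg.symm y, h.lieAlg.symm x]

theorem br_mul_left (h : IsPoisson2 K ev od mul br sq) (x y z : P) :
    br (mul x y) z = mul x (br y z) + mul y (br x z) := by
  rw [h.leibniz, h.commAlg.comm (br x z)]

theorem br_mul_self_left [CharP K 2] (h : IsPoisson2 K ev od mul br sq) (x v : P) :
    br x (mul x v) = mul x (br x v) := by
  rw [h.br_mul_right, h.lieAlg.br_self, h.commAlg.zero_left, add_zero]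

theorem mul_br [CharP K 2] (h : IsPoisson2 K ev od mul br sq) (x y v : P) :
    mul (br x y) v = mul x (br y v) + br y (mul x v) := by
  rw [h.br_mul_right x v y, h.lieAlg.symm y x, add_add_cancel_left_of_charTwo K]

theorem mul_br_mul_self [CharP K 2] (h : IsPoisson2 K ev od mul br sq) (x y v : P) :
    mul y (br x (mul x v)) = mul x (mul y (br x v)) := by
  rw [h.br_mul_self_left, h.commAlg.left_comm]

theorem mul_mul_br [CharP K 2] (h : IsPoisson2 K ev od mul br sq) (x y w : P) :
    mul y (mul y (br x w)) =
      mul y (br x (mul y w)) + mul x (mul y (br y w)) + br y (mul x (mul y w)) := by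
  rw [h.br_mul_right y w x, h.br_mul_right x (mul y w) y, h.br_mul_self_left,
    h.commAlg.add_right, h.lieAlg.symm y x, h.commAlg.left_comm (br x y) y w]
  -- the cross terms `y({x, y}w)` and `x(y{y, w})` now each occur twice
  abel_nf
  simp only [two_zsmul, add_self_eq_zero_of_charTwo K, add_zero]

theorem adjoint_isPoissonRep2 [CharP K 2] (h : IsPoisson2 K ev od mul br sq) :
    IsPoissonRep2 K ev od mul br sq ev od mul br where
  π_add_left := h.commAlg.add_left
  π_smul_left := h.commAlg.smul_left
  π_add_right := h.commAlg.add_right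
  π_smul_right := h.commAlg.smul_right
  γ_add_left := h.lieAlg.add_left
  γ_smul_left := h.lieAlg.smul_left
  γ_add_right := h.lieAlg.add_right
  γ_smul_right := h.lieAlg.smul_right
  π_even_ee := h.commAlg.grade_ee
  π_even_eo := h.commAlg.grade_eo
  π_even_oe _ hx _ hv := h.commAlg.grade_oe hx hv
  π_even_oo := h.commAlg.grade_oo
  γ_even_ee := h.lieAlg.grade_ee
  γ_even_eo := h.lieAlg.grade_eo
  γ_even_oe _ hx _ hv := h.lieAlg.grade_oe hx hv
  γ_even_oo := h.lieAlg.grade_oo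
  π_mul := h.commAlg.assoc
  γ_br := h.lieAlg.jacobi
  γ_sq := h.lieAlg.sq_jacobi
  compat_mul := h.br_mul_left
  compat_br := h.mul_br
  compat_odd_ev x _ y _ v _ := h.mul_br_mul_self x y v
  compat_odd_od x _ y _ w _ := h.mul_mul_br x y w

end IsPoisson2

/-- For a Poisson superalgebra `P` in characteristic 2, the maps
`π(x)(v) = xv` and `γ(x)(v) = {x,v}` define the adjoint representation of `P` on
itself; in particular `y{x, xv} = x(y{x,v})` for `x` odd, `y, v` even, and
`y(y{x,w}) = y{x, yw} + x(y{y,w}) + {y, x(yw)}`... (the two characteristic-2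
compatibility conditions hold). -/
theorem adjoint_is_representation
    {K P : Type*} [Field K] [CharP K 2] [AddCommGroup P] [Module K P]
    (ev od : Submodule K P) (mul br : P → P → P) (sq : P → P)
    (hP : IsPoisson2 K ev od mul br sq) :
    IsPoissonRep2 K ev od mul br sq ev od
      (fun x v => mul x v) (fun x v => br x v) ∧
    (∀ x ∈ od, ∀ y ∈ ev, ∀ v ∈ ev,
      mul y (br x (mul x v)) = mul x (mul y (br x v))) ∧
    (∀ x ∈ od, ∀ y ∈ ev, ∀ w ∈ od,
      mul y (mul y (br x w)) =
        mul y (br x (mul y w)) + mul x (mul y (br y w)) + br y (mul x (mul y w))) :=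
  have adjoint := hP.adjoint_isPoissonRep2
  ⟨adjoint, adjoint.compat_odd_ev, adjoint.compat_odd_od⟩
end
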